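/- Let ⊏ be any total order on C such that c_α ⊏ c_β whenever |α| > |β|, and let ≪ be the length-plus-lexicographic order on C* induced by ⊏ (u ≪ v if and only if |u| < |v|, or |u| = |v| and u precedes v lexicographically with respect to ⊏). If w, w' ∈ C* and w' is obtained from w by a single application of a rule of T, then w' ≪ w. -/

import Mathlib

/-! Common definitions: Plactic monoid, columns, rows, tableaux, the
rewriting system `(C,T)`. -/

/-- Words over the ordered alphabet `A = {1 < 2 < ⋯ < n}`, modelled as `Fin n`. -/
abbrev Word (n : ℕ) := List (Fin n)

/-- A single application, in context, of one of the Knuth defining relations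
`(xzy, zxy)` for `x ≤ y < z` and `(yxz, yzx)` for `x < y ≤ z`. -/
inductive KnuthStep (n : ℕ) : Word n → Word n → Prop
  | left (u v : Word n) (x y z : Fin n) (h1 : x ≤ y) (h2 : y < z) :
      KnuthStep n (u ++ [x, z, y] ++ v) (u ++ [z, x, y] ++ v)
  | right (u v : Word n) (x y z : Fin n) (h1 : x < y) (h2 : y ≤ z) :
      KnuthStep n (u ++ [y, x, z] ++ v) (u ++ [y, z, x] ++ v)

/-- `u =_{M_n} v`: the words `u`, `v` represent the same element of the Plactic
monoid `M_n`, i.e. they are equivalent under the congruence generated by the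
Knuth relations. -/
def PlacticEq (n : ℕ) : Word n → Word n → Prop := Relation.EqvGen (KnuthStep n)

/-- A column: a nonempty strictly decreasing word. -/
def IsColumn {n : ℕ} (w : Word n) : Prop := w ≠ [] ∧ w.Chain' (fun a b => b < a)

/-- A row: a nondecreasing word. -/
def IsRow {n : ℕ} (w : Word n) : Prop := w.Chain' (fun a b => a ≤ b)

/-- The row `α` dominates the row `β`: `|α| ≤ |β|` and `α_i > β_i` for all
`i ≤ |α|`. -/
def Dominates {n : ℕ} (α β : Word n) : Prop :=
  α.length ≤ β.length ∧
    ∀ i (hα : i < α.length) (hβ : i < β.length), β[i]'hβ < α[i]'hα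

/-- `rs` is the list of rows, from top to bottom, of (the planar representation
of) a tableau: each row is a nonempty row, and each row dominates the next. -/
def IsTableauRows {n : ℕ} (rs : List (Word n)) : Prop :=
  (∀ r ∈ rs, r ≠ [] ∧ IsRow r) ∧ rs.Chain' Dominates

/-- `w` is a tableau: it is the product, from top to bottom, of the rows of a
planar tableau (this decomposition is automatically the decomposition of `w`
into rows of maximal length). -/
def IsTableau {n : ℕ} (w : Word n) : Prop :=
  ∃ rs : List (Word n), IsTableauRows rs ∧ w = rs.flatten

/-- The order `⪰` on columns: for `α = α_k⋯α_1` and `β = β_l⋯β_1` (so that the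
letters of a column are indexed from the bottom, i.e. from the right-hand end
of the word), `α ⪰ β` iff `k ≥ l` and `α_i ≤ β_i` for all `i ≤ l`; that is,
`α` may appear immediately to the left of `β` in a tableau. -/
def ColGE {n : ℕ} (α β : Word n) : Prop :=
  β.length ≤ α.length ∧
    ∀ (i : ℕ) (a b : Fin n), α.reverse[i]? = some a → β.reverse[i]? = some b → a ≤ b

/-- The finite alphabet `C = {c_α : α a column}`. -/
abbrev CLetter (n : ℕ) := {w : Word n // IsColumn w}

/-- Words over the alphabet `C`. -/
abbrev CWord (n : ℕ) := List (CLetter n)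

/-- The image of a word over `C` under `c_α ↦ α`. -/
def evalC {n : ℕ} (u : CWord n) : Word n := (u.map Subtype.val).flatten

/-- `SingleColP u w`: the tableau `P(u)` consists of a single column, namely
`w`.  (Since tableaux form a cross-section of `M_n`, and a word which is a
single column is itself a tableau, this holds precisely when `w` is a column
representing the same element of `M_n` as `u`.) -/
def SingleColP (n : ℕ) (u w : Word n) : Prop := IsColumn w ∧ PlacticEq n u w

/-- `TwoColP u w₁ w₂`: the tableau `P(u)` consists of exactly two columns, with
left column `w₁` and right column `w₂`.  (Since tableaux form a cross-section
of `M_n`, and the words `w₁ w₂` with `w₁ ⪰ w₂` columns are exactly the column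
readings of two-column tableaux, this holds precisely when `w₁, w₂` are columns
with `w₁ ⪰ w₂` whose concatenation represents the same element of `M_n` as
`u`.) -/
def TwoColP (n : ℕ) (u w₁ w₂ : Word n) : Prop :=
  IsColumn w₁ ∧ IsColumn w₂ ∧ ColGE w₁ w₂ ∧ PlacticEq n u (w₁ ++ w₂)

/-- The rules of the rewriting system `T` on `C*`: for columns `α ⋡ β`,
`c_α c_β → c_γ` if `P(αβ)` is the single column `γ`, and `c_α c_β → c_γ c_δ`
if `P(αβ)` has exactly two columns `γ` (left) and `δ` (right). -/
inductive TRule (n : ℕ) : CWord n → CWord n → Prop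
  | one (α β γ : CLetter n) (h : ¬ ColGE α.1 β.1)
      (hP : SingleColP n (α.1 ++ β.1) γ.1) :
      TRule n [α, β] [γ]
  | two (α β γ δ : CLetter n) (h : ¬ ColGE α.1 β.1)
      (hP : TwoColP n (α.1 ++ β.1) γ.1 δ.1) :
      TRule n [α, β] [γ, δ]

/-- One step of rewriting using a rule of `T`, in context. -/
def TStep (n : ℕ) (u v : CWord n) : Prop :=
  ∃ p q l r, TRule n l r ∧ u = p ++ l ++ q ∧ v = p ++ r ++ q

/-! The length of a longest strictly decreasing subsequence of a word is invariant under the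
Knuth relations, hence constant on elements of `M_n`. If `α ⋡ β`, the word `αβ` has a decreasing
subsequence of length `|α| + 1`. If `γ ⪰ δ`, then for every letter `b` the column `δ` has at most
as many letters `≤ b` as `γ`; splitting a decreasing subsequence of `γδ` at its first letter `b`
taken from `δ` therefore bounds its length by `|γ|`. So a rule `c_α c_β → c_γ c_δ` forces
`|γ| > |α|`, i.e. `c_γ ⊏ c_α`, while a rule `c_α c_β → c_γ` shortens the word. -/

open List

section ListLemmas

variable {α : Type*}

theorem sublist_append_cons_cons_swap {s u v : List α} {a b : α}
    (h : s <+ u ++ a :: b :: v) :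
    s <+ u ++ b :: a :: v ∨ ∃ s₁ s₃, s = s₁ ++ a :: b :: s₃ ∧ s₁ <+ u ∧ s₃ <+ v := by
  obtain ⟨s₁, s₂, rfl, h₁, h₂⟩ := sublist_append_iff.mp h
  rcases sublist_cons_iff.mp h₂ with h₂ | ⟨t, rfl, ht⟩
  · left
    rcases sublist_cons_iff.mp h₂ with h₂ | ⟨t, rfl, ht⟩
    · exact h₁.append ((h₂.cons a).cons b)
    · exact h₁.append ((ht.cons a).cons_cons b)
  · rcases sublist_cons_iff.mp ht with ht | ⟨r, rfl, hr⟩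
    · exact .inl (h₁.append ((ht.cons_cons a).cons b))
    · exact .inr ⟨s₁, r, rfl, h₁, hr⟩

theorem exists_eq_append_cons_of_getElem?_reverse {l : List α} {i : ℕ} {a : α}
    (h : l.reverse[i]? = some a) : ∃ p q, l = p ++ a :: q ∧ q.length = i := by
  obtain ⟨hi, rfl⟩ := List.getElem?_eq_some_iff.mp h
  refine ⟨(l.reverse.drop (i + 1)).reverse, (l.reverse.take i).reverse, ?_, by simp at hi ⊢; omega⟩
  conv_lhs => rw [← reverse_reverse l, ← take_append_drop i l.reverse, ← getElem_cons_drop hi]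
  simp

end ListLemmas

section DecreasingSublist

variable {α : Type*} [LinearOrder α]

def HasDecreasingSublist (w : List α) (k : ℕ) : Prop :=
  ∃ s, s <+ w ∧ s.IsChain (· > ·) ∧ s.length = k

theorem HasDecreasingSublist.swap_of_lt {u v : List α} {a b : α} {k : ℕ} (hab : a < b)
    (h : HasDecreasingSublist (u ++ a :: b :: v) k) :
    HasDecreasingSublist (u ++ b :: a :: v) k := by
  obtain ⟨s, hs, hdec, rfl⟩ := h
  rcases sublist_append_cons_cons_swap hs with hs | ⟨s₁, s₃, rfl, -, -⟩
  · exact ⟨s, hs, hdec, rfl⟩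
  · exact absurd (isChain_append_cons_cons.mp hdec).2.1 hab.asymm

theorem HasDecreasingSublist.swap_of_le_of_lt {u v : List α} {a b c : α} {k : ℕ}
    (hbc : b ≤ c) (hca : c < a) (h : HasDecreasingSublist (u ++ a :: b :: c :: v) k) :
    HasDecreasingSublist (u ++ b :: a :: c :: v) k := by
  obtain ⟨s, hs, hdec, rfl⟩ := h
  rcases sublist_append_cons_cons_swap hs with hs | ⟨s₁, s₃, rfl, h₁, h₃⟩
  · exact ⟨s, hs, hdec, rfl⟩
  rw [isChain_append_cons_cons] at hdec
  obtain ⟨hleft, -, hright⟩ := hdec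
  rcases sublist_cons_iff.mp h₃ with h₃ | ⟨r, rfl, -⟩
  · refine ⟨s₁ ++ a :: c :: s₃, h₁.append (((h₃.cons_cons c).cons_cons a).cons b), ?_, by simp⟩
    exact isChain_append_cons_cons.mpr ⟨hleft, hca, hright.imp_head fun h => h.trans_le hbc⟩
  · exact absurd (isChain_cons_cons.mp hright).1 hbc.not_gt

theorem HasDecreasingSublist.swap_of_lt_of_le {u v : List α} {a b c : α} {k : ℕ}
    (hbc : b < c) (hca : c ≤ a) (h : HasDecreasingSublist (u ++ c :: a :: b :: v) k) :
    HasDecreasingSublist (u ++ c :: b :: a :: v) k := by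
  obtain ⟨s, hs, hdec, rfl⟩ := h
  rw [← singleton_append, ← append_assoc] at hs
  rcases sublist_append_cons_cons_swap hs with hs | ⟨s₁, s₃, rfl, h₁, h₃⟩
  · exact ⟨s, by simpa using hs, hdec, rfl⟩
  obtain ⟨s₁, l, rfl, hu, hl⟩ := sublist_append_iff.mp h₁
  rw [isChain_append_cons_cons] at hdec
  obtain ⟨hleft, -, hright⟩ := hdec
  rcases sublist_singleton.mp hl with rfl | rfl
  · rw [append_nil] at hleft ⊢
    refine ⟨s₁ ++ c :: b :: s₃, hu.append (((h₃.cons a).cons_cons b).cons_cons c), ?_, by simp⟩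
    have hs₁ := isChain_append.mp hleft
    refine isChain_append_cons_cons.mpr
      ⟨isChain_append.mpr ⟨hs₁.1, isChain_singleton c, ?_⟩, hbc, hright⟩
    intro x hx y hy
    rw [head?_cons, Option.mem_some_iff] at hy
    exact hy ▸ hca.trans_lt (hs₁.2.2 x hx a rfl)
  · rw [append_assoc, singleton_append] at hleft
    exact absurd (isChain_append_cons_cons.mp hleft).2.1 hca.not_gt

theorem countP_le_of_getElem?_le {l₁ l₂ : List α} (h₂ : l₂.Pairwise (· ≤ ·))
    (hlen : l₂.length ≤ l₁.length)
    (hle : ∀ (i : ℕ) (a b : α), l₁[i]? = some a → l₂[i]? = some b → a ≤ b) (c : α) :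
    l₂.countP (· ≤ c) ≤ l₁.countP (· ≤ c) := by
  induction l₂ generalizing l₁ with
  | nil => simp
  | cons d l₂ ih =>
    obtain _ | ⟨g, l₁⟩ := l₁
    · simp at hlen
    have hgd : g ≤ d := hle 0 g d rfl rfl
    by_cases hdc : d ≤ c
    · have := ih (pairwise_cons.mp h₂).2 (by simpa using hlen) (fun i => hle (i + 1))
      simpa [countP_cons, hdc, hgd.trans hdc] using this
    · have hzero : (d :: l₂).countP (· ≤ c) = 0 := by
        refine countP_eq_zero.mpr fun x hx hxc => hdc ?_
        rcases mem_cons.mp hx with rfl | hx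
        · simpa using hxc
        · exact ((pairwise_cons.mp h₂).1 x hx).trans (by simpa using hxc)
      simp only [hzero, Nat.zero_le]

theorem length_le_of_sublist_append_of_countP_le {γ δ s : List α}
    (hdom : ∀ c, δ.countP (· ≤ c) ≤ γ.countP (· ≤ c)) (hs : s <+ γ ++ δ)
    (hdec : s.IsChain (· > ·)) : s.length ≤ γ.length := by
  obtain ⟨s₁, s₂, rfl, h₁, h₂⟩ := sublist_append_iff.mp hs
  obtain _ | ⟨b, t⟩ := s₂
  · simpa using h₁.length_le
  rw [isChain_iff_pairwise, pairwise_append] at hdec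
  have hs₁ : ∀ x ∈ s₁, b < x := fun x hx => hdec.2.2 x hx b mem_cons_self
  have hs₂ : ∀ y ∈ b :: t, y ≤ b := by
    intro y hy
    rcases mem_cons.mp hy with rfl | hy
    · exact le_rfl
    · exact ((pairwise_cons.mp hdec.2.1).1 y hy).le
  calc (s₁ ++ b :: t).length = s₁.countP (b < ·) + (b :: t).countP (· ≤ b) := by
        rw [countP_eq_length.mpr (by simpa using hs₁), countP_eq_length.mpr (by simpa using hs₂),
          length_append]
    _ ≤ γ.countP (b < ·) + δ.countP (· ≤ b) := add_le_add h₁.countP_le h₂.countP_le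
    _ ≤ γ.countP (b < ·) + γ.countP (· ≤ b) := Nat.add_le_add_left (hdom b) _
    _ = γ.length := by simp [length_eq_countP_add_countP (b < ·) (l := γ)]

end DecreasingSublist

section Plactic

variable {n : ℕ}

theorem KnuthStep.hasDecreasingSublist_iff {u v : Word n} (h : KnuthStep n u v) {k : ℕ} :
    HasDecreasingSublist u k ↔ HasDecreasingSublist v k := by
  cases h with
  | left u v x y z hxy hyz =>
    simp only [append_assoc, cons_append, nil_append]
    exact ⟨.swap_of_lt (hxy.trans_lt hyz), .swap_of_le_of_lt hxy hyz⟩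
  | right u v x y z hxy hyz =>
    have forward := HasDecreasingSublist.swap_of_lt (u := u ++ [y]) (v := v) (k := k)
      (hxy.trans_le hyz)
    simp only [append_assoc, cons_append, nil_append] at forward ⊢
    exact ⟨forward, .swap_of_lt_of_le hxy hyz⟩

theorem PlacticEq.hasDecreasingSublist_iff {u v : Word n} (h : PlacticEq n u v) {k : ℕ} :
    HasDecreasingSublist u k ↔ HasDecreasingSublist v k := by
  induction h with
  | rel _ _ h => exact h.hasDecreasingSublist_iff
  | refl => rfl
  | symm _ _ _ ih => exact ih.symm
  | trans _ _ _ _ _ ih₁ ih₂ => exact ih₁.trans ih₂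

theorem hasDecreasingSublist_of_not_colGE {α β : Word n} (hα : IsColumn α) (hβ : IsColumn β)
    (h : ¬ColGE α β) : HasDecreasingSublist (α ++ β) (α.length + 1) := by
  rcases not_and_or.mp h with hlen | hrow
  · exact ⟨β.take (α.length + 1), (take_sublist _ _).trans (sublist_append_right _ _),
      hβ.2.take _, by simp; omega⟩
  push Not at hrow
  obtain ⟨i, a, b, ha, hb, hba⟩ := hrow
  obtain ⟨p, q, rfl, rfl⟩ := exists_eq_append_cons_of_getElem?_reverse ha
  obtain ⟨r, t, rfl, ht⟩ := exists_eq_append_cons_of_getElem?_reverse hb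
  have hprefix : p ++ [a] <+: p ++ a :: q := ⟨q, by simp⟩
  have hsuffix : b :: t <:+ r ++ b :: t := suffix_append r _
  refine ⟨p ++ a :: b :: t, ?_, ?_, by simp; omega⟩
  · simp
  · exact isChain_append_cons_cons.mpr ⟨hα.2.prefix hprefix, hba, hβ.2.suffix hsuffix⟩

theorem ColGE.countP_le {γ δ : Word n} (hδ : IsColumn δ) (h : ColGE γ δ) (c : Fin n) :
    δ.countP (· ≤ c) ≤ γ.countP (· ≤ c) := by
  have hsorted : δ.reverse.Pairwise (· ≤ ·) :=
    pairwise_reverse.mpr ((isChain_iff_pairwise.mp hδ.2).imp le_of_lt)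
  simpa using countP_le_of_getElem?_le hsorted (by simpa using h.1) h.2 c

theorem length_lt_of_not_colGE_of_twoColP {α β γ δ : Word n} (hα : IsColumn α)
    (hβ : IsColumn β) (hαβ : ¬ColGE α β) (hP : TwoColP n (α ++ β) γ δ) :
    α.length < γ.length := by
  obtain ⟨-, hδ, hγδ, heq⟩ := hP
  obtain ⟨s, hs, hdec, hlen⟩ :=
    heq.hasDecreasingSublist_iff.mp (hasDecreasingSublist_of_not_colGE hα hβ hαβ)
  have := length_le_of_sublist_append_of_countP_le (hγδ.countP_le hδ) hs hdec
  omega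

end Plactic

theorem statement4_general {n : ℕ} (lt : CLetter n → CLetter n → Prop)
    (hlen : ∀ a b : CLetter n, b.1.length < a.1.length → lt a b)
    (w w' : CWord n) (h : TStep n w w') :
    w'.length < w.length ∨ (w'.length = w.length ∧ List.Lex lt w' w) := by
  obtain ⟨p, q, l, r, hrule, rfl, rfl⟩ := h
  cases hrule with
  | one => left; simp
  | two α β γ δ hαβ hP =>
    have hγα : lt γ α := hlen γ α (length_lt_of_not_colGE_of_twoColP α.2 β.2 hαβ hP)
    right
    refine ⟨by simp, ?_⟩
    rw [append_assoc, append_assoc]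
    exact (Lex.rel hγα).append_left lt p

/-- Let `⊏` be any total (strict) order on `C` such that
`c_α ⊏ c_β` whenever `|α| > |β|`, and let `≪` be the induced
length-plus-lexicographic order on `C*` (`u ≪ v` iff `|u| < |v|`, or
`|u| = |v|` and `u` precedes `v` lexicographically with respect to `⊏`).
If `w'` is obtained from `w` by a single application of a rule of `T`, then
`w' ≪ w`. -/
theorem statement4 {n : ℕ} (lt : CLetter n → CLetter n → Prop)
    (hlt : IsStrictTotalOrder (CLetter n) lt)
    (hlen : ∀ a b : CLetter n, b.1.length < a.1.length → lt a b)
    (w w' : CWord n) (h : TStep n w w') :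
    w'.length < w.length ∨ (w'.length = w.length ∧ List.Lex lt w' w) :=
  statement4_general lt hlen w w' h
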